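/- arXiv:1612.00411 — 7 statements merged into one kernel-verified Lean document; each statement's English description precedes it below -/
import Mathlib

section
/- Let n ≥ 2 and d ≥ 2 be integers. There exist homogeneous forms f1, ..., f_{n+1} of degree d in C[x_1,...,x_n] such that the kernel of the C-algebra homomorphism C[y_1,...,y_{n+1}] → C[x_1,...,x_n] sending y_i to f_i is a principal prime ideal generated by a single irreducible polynomial of degree d^{n−1} (where C[y_1,...,y_{n+1}] is graded with each y_i of degree 1); in particular, among the degree-d forms f1, ..., f_{n+1} there is exactly one polynomial relation of degree d^{n−1} and no nonzero relation of smaller degree. -/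
/-!
Suppose `K` contains a primitive `d`-th root of unity and let `μ_d^n` act on
`K[x_0, …, x_(n-1)]` by scaling the variables. The invariants are exactly the polynomials in
`x_0^d, …, x_(n-1)^d`. Hence, for any `p`, the polynomial `W(T) = ∏ (T - q)` over the orbit of `p`
has coefficients in `K[x^d]`: `W(T) = P(T, x_0^d, …, x_(n-1)^d)` with `P` monic in `T`, and `P` is
a relation between `p, x_0^d, …, x_(n-1)^d`. Dividing any relation by `P` leaves a remainder of
`T`-degree smaller than the orbit which vanishes at `p`, hence at every conjugate of `p`, so it is
zero: `P` generates the kernel. This kernel is prime, so `P` is irreducible; and if `p` is a form of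
degree `d`, the coefficient of `T^j` in `W` has degree `d (|orbit| - j)`, which makes `P`
homogeneous of degree `|orbit|`. The orbit of `x_0^(d-1) (x_1 + ⋯ + x_(n-1))` consists of the
`d^(n-1)` distinct forms `x_0^(d-1) (c_1 x_1 + ⋯ + c_(n-1) x_(n-1))` with all `c_i ∈ μ_d`.
-/

open MvPolynomial
open scoped Polynomial

namespace MvPolynomial

variable {K σ : Type*} [CommRing K]

theorem IsHomogeneous.of_expand {R : Type*} [CommSemiring R] {d : ℕ} (hd : d ≠ 0)
    {φ : MvPolynomial σ R} {k : ℕ} (h : (expand d φ).IsHomogeneous (d * k)) :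
    φ.IsHomogeneous k := by
  intro u hu
  have hdu : Finsupp.weight 1 (d • u) = d * k := h (by rwa [coeff_expand_smul (hp := hd)])
  rw [map_nsmul, smul_eq_mul] at hdu
  exact Nat.eq_of_mul_eq_mul_left (Nat.pos_of_ne_zero hd) hdu

theorem isHomogeneous_of_coeff_finSuccEquiv {R : Type*} [CommSemiring R] {n D : ℕ}
    {φ : MvPolynomial (Fin (n + 1)) R} (hdeg : (finSuccEquiv R n φ).natDegree ≤ D)
    (h : ∀ j, ((finSuccEquiv R n φ).coeff j).IsHomogeneous (D - j)) : φ.IsHomogeneous D := by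
  intro u hu
  rw [← Finsupp.cons_tail u, ← finSuccEquiv_coeff_coeff] at hu
  have hu0 : u 0 ≤ D := by
    by_contra! hlt
    exact hu (by rw [Polynomial.coeff_eq_zero_of_natDegree_lt (hdeg.trans_lt hlt), coeff_zero])
  have htail := h _ hu
  rw [← Finsupp.cons_tail u]
  simp only [Finsupp.weight_apply, Pi.one_apply, smul_eq_mul, mul_one,
    Finsupp.sum_cons] at htail ⊢
  omega

theorem isHomogeneous_coeff_prod_X_sub_C {ι : Type*} (s : Finset ι) {a : ι → MvPolynomial σ K}
    {e : ℕ} (ha : ∀ i ∈ s, (a i).IsHomogeneous e) (j : ℕ) :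
    ((∏ i ∈ s, (Polynomial.X - Polynomial.C (a i))).coeff j).IsHomogeneous
      (e * (s.card - j)) := by
  rcases le_or_gt j s.card with hj | hj
  · simp_rw [sub_eq_add_neg, ← map_neg]
    rw [Finset.prod_X_add_C_coeff s _ hj]
    refine IsHomogeneous.sum _ _ _ fun t ht ↦ ?_
    obtain ⟨hts, hcard⟩ := Finset.mem_powersetCard.1 ht
    simpa [hcard, mul_comm] using
      IsHomogeneous.prod t (fun i ↦ -a i) (fun _ ↦ e) fun i hi ↦ (ha i (hts hi)).neg
  · have hdeg : (∏ i ∈ s, (Polynomial.X - Polynomial.C (a i))).natDegree ≤ s.card :=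
      (Polynomial.natDegree_prod_le _ _).trans <| by
        simpa using Finset.sum_le_sum fun i (_ : i ∈ s) ↦ Polynomial.natDegree_X_sub_C_le (a i)
    rw [Polynomial.coeff_eq_zero_of_natDegree_lt (hdeg.trans_lt hj)]
    exact isHomogeneous_zero _ _ _

theorem IsHomogeneous.le_of_dvd [IsDomain K] {P Q : MvPolynomial σ K} {D e : ℕ}
    (hP : P.IsHomogeneous D) (hQ : Q.IsHomogeneous e) (hQ0 : Q ≠ 0) (h : P ∣ Q) : D ≤ e := by
  have hP0 : P ≠ 0 := by
    rintro rfl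
    exact hQ0 (zero_dvd_iff.1 h)
  rw [← hP.totalDegree hP0, ← hQ.totalDegree hQ0]
  exact totalDegree_le_of_dvd_of_isDomain h hQ0

noncomputable def scale (t : σ → Kˣ) : MvPolynomial σ K →ₐ[K] MvPolynomial σ K :=
  aeval fun i ↦ (t i : K) • X i

theorem scale_monomial (t : σ → Kˣ) (u : σ →₀ ℕ) (c : K) :
    scale t (monomial u c) = monomial u ((u.prod fun i k ↦ (t i : K) ^ k) * c) := by
  rw [scale, aeval_monomial, monomial_eq, algebraMap_eq]
  simp only [smul_eq_C_mul, mul_pow, Finsupp.prod_mul, ← map_pow]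
  rw [← map_finsuppProd, C_mul]
  ring

theorem coeff_scale (t : σ → Kˣ) (p : MvPolynomial σ K) (u : σ →₀ ℕ) :
    coeff u (scale t p) = (u.prod fun i k ↦ (t i : K) ^ k) * coeff u p := by
  classical
  induction p using MvPolynomial.induction_on' with
  | monomial u' c =>
    rw [scale_monomial, coeff_monomial, coeff_monomial]
    split_ifs with h
    · rw [h]
    · rw [mul_zero]
  | add p q hp hq => rw [map_add, coeff_add, coeff_add, hp, hq, mul_add]

theorem scale_scale (s t : σ → Kˣ) (p : MvPolynomial σ K) :
    scale s (scale t p) = scale (s * t) p := by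
  rw [← AlgHom.comp_apply]
  congr 1
  refine algHom_ext fun i ↦ ?_
  simp [scale, smul_smul, mul_comm]

theorem scale_one (p : MvPolynomial σ K) : scale 1 p = p := by
  simp [scale]

theorem scale_inv_scale (t : σ → Kˣ) (p : MvPolynomial σ K) :
    scale t⁻¹ (scale t p) = p := by
  rw [scale_scale, inv_mul_cancel, scale_one]

theorem scale_scale_inv (t : σ → Kˣ) (p : MvPolynomial σ K) :
    scale t (scale t⁻¹ p) = p := by
  rw [scale_scale, mul_inv_cancel, scale_one]

theorem scale_expand {d : ℕ} (t : σ → Kˣ) (ht : ∀ i, t i ^ d = 1) (p : MvPolynomial σ K) :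
    scale t (expand d p) = expand d p := by
  rw [← AlgHom.comp_apply]
  congr 1
  refine algHom_ext fun i ↦ ?_
  simp [scale, smul_pow, ← Units.val_pow_eq_pow_val, ht]

theorem IsHomogeneous.scale {p : MvPolynomial σ K} {n : ℕ} (hp : p.IsHomogeneous n)
    (t : σ → Kˣ) : (scale t p).IsHomogeneous n := by
  simpa only [one_mul, MvPolynomial.scale, smul_eq_C_mul] using
    hp.aeval _ fun i ↦ (isHomogeneous_X K i).C_mul (t i : K)

theorem mem_range_expand_of_forall_scale_eq [IsDomain K] {d : ℕ} [NeZero d] {ζ : K}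
    (hζ : IsPrimitiveRoot ζ d) {p : MvPolynomial σ K}
    (h : ∀ t : σ → rootsOfUnity d K, scale (fun i ↦ t i) p = p) :
    p ∈ Set.range (expand d) := by
  classical
  have hdvd : ∀ u ∈ p.support, ∀ i, d ∣ u i := by
    intro u hu i
    have hfix := congrArg (coeff u) (h (Pi.mulSingle i hζ.toRootsOfUnity))
    rw [coeff_scale, Finsupp.prod_eq_single i (fun j _ hj ↦ by simp [hj]) (by simp)] at hfix
    simp only [Pi.mulSingle_eq_same, IsPrimitiveRoot.val_toRootsOfUnity_coe] at hfix
    exact (hζ.pow_eq_one_iff_dvd _).1 <|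
      mul_right_cancel₀ (mem_support_iff.1 hu) (hfix.trans (one_mul _).symm)
  refine ⟨∑ u ∈ p.support, monomial (u.mapRange (· / d) (Nat.zero_div d)) (coeff u p), ?_⟩
  conv_rhs => rw [p.as_sum]
  rw [map_sum]
  refine Finset.sum_congr rfl fun u hu ↦ ?_
  rw [expand_monomial]
  congr
  ext i
  simp [Nat.mul_div_cancel' (hdvd u hu i)]

def scaleOrbit (d : ℕ) (p : MvPolynomial σ K) : Set (MvPolynomial σ K) :=
  Set.range fun t : σ → rootsOfUnity d K ↦ scale (fun i ↦ t i) p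

theorem self_mem_scaleOrbit (d : ℕ) (p : MvPolynomial σ K) : p ∈ scaleOrbit d p :=
  ⟨1, scale_one p⟩

theorem scale_mem_scaleOrbit {d : ℕ} (t : σ → rootsOfUnity d K) {p x : MvPolynomial σ K}
    (hx : x ∈ scaleOrbit d p) : scale (fun i ↦ t i) x ∈ scaleOrbit d p := by
  obtain ⟨s, rfl⟩ := hx
  exact ⟨t * s, by rw [scale_scale]; rfl⟩

section Orbit

variable [IsDomain K] [Finite σ] (d : ℕ) [NeZero d]

theorem finite_scaleOrbit (p : MvPolynomial σ K) : (scaleOrbit d p).Finite :=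
  Set.finite_range _

noncomputable def scaleOrbitPoly (p : MvPolynomial σ K) : (MvPolynomial σ K)[X] :=
  ∏ x ∈ (finite_scaleOrbit d p).toFinset, (Polynomial.X - Polynomial.C x)

variable {d}

theorem map_scale_scaleOrbitPoly (t : σ → rootsOfUnity d K) (p : MvPolynomial σ K) :
    (scaleOrbitPoly d p).map (scale fun i ↦ t i).toRingHom = scaleOrbitPoly d p := by
  simp only [scaleOrbitPoly, Polynomial.map_prod, Polynomial.map_sub, Polynomial.map_X,
    Polynomial.map_C]
  refine Finset.prod_nbij' (scale fun i ↦ t i) (scale fun i ↦ t⁻¹ i) (fun x hx ↦ ?_)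
    (fun x hx ↦ ?_) (fun x _ ↦ ?_) (fun x _ ↦ ?_) fun x _ ↦ ?_
  · rw [Set.Finite.mem_toFinset] at hx ⊢
    exact scale_mem_scaleOrbit t hx
  · rw [Set.Finite.mem_toFinset] at hx ⊢
    exact scale_mem_scaleOrbit t⁻¹ hx
  · exact scale_inv_scale _ x
  · exact scale_scale_inv (fun i ↦ (t i : Kˣ)) x
  · rw [AlgHom.toRingHom_eq_coe, RingHom.coe_coe]

theorem scaleOrbitPoly_monic (p : MvPolynomial σ K) : (scaleOrbitPoly d p).Monic :=
  Polynomial.monic_prod_X_sub_C _ _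

theorem natDegree_scaleOrbitPoly (p : MvPolynomial σ K) :
    (scaleOrbitPoly d p).natDegree = (scaleOrbit d p).ncard := by
  simp [scaleOrbitPoly, Set.ncard_eq_toFinset_card _ (finite_scaleOrbit d p)]

theorem eval_scaleOrbitPoly_self (p : MvPolynomial σ K) : (scaleOrbitPoly d p).eval p = 0 := by
  rw [scaleOrbitPoly, Polynomial.eval_prod]
  exact Finset.prod_eq_zero ((Set.Finite.mem_toFinset _).2 (self_mem_scaleOrbit d p)) (by simp)

theorem scaleOrbitPoly_mem_lifts {ζ : K} (hζ : IsPrimitiveRoot ζ d) (p : MvPolynomial σ K) :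
    scaleOrbitPoly d p ∈ Polynomial.lifts (expand d).toRingHom := by
  refine (Polynomial.lifts_iff_coeff_lifts _).2 fun j ↦ ?_
  refine mem_range_expand_of_forall_scale_eq hζ fun t ↦ ?_
  conv_rhs => rw [← map_scale_scaleOrbitPoly t p]
  rw [Polynomial.coeff_map]
  rfl

theorem isHomogeneous_coeff_scaleOrbitPoly {p : MvPolynomial σ K} {e : ℕ}
    (hp : p.IsHomogeneous e) (j : ℕ) :
    ((scaleOrbitPoly d p).coeff j).IsHomogeneous (e * ((scaleOrbit d p).ncard - j)) := by
  rw [Set.ncard_eq_toFinset_card _ (finite_scaleOrbit d p)]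
  refine isHomogeneous_coeff_prod_X_sub_C _ (fun x hx ↦ ?_) j
  obtain ⟨t, rfl⟩ := (Set.Finite.mem_toFinset _).1 hx
  exact hp.scale _

theorem eq_zero_of_eval_map_expand_eq_zero {p : MvPolynomial σ K} {R : (MvPolynomial σ K)[X]}
    (hR : R.natDegree < (scaleOrbit d p).ncard) (h : (R.map (expand d).toRingHom).eval p = 0) :
    R = 0 := by
  rw [← Polynomial.map_eq_zero_iff (expand_injective (NeZero.pos d))]
  refine Polynomial.eq_zero_of_natDegree_lt_card_of_eval_eq_zero' _
    (finite_scaleOrbit d p).toFinset (fun x hx ↦ ?_) ?_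
  · simp only [Set.Finite.mem_toFinset, scaleOrbit, Set.mem_range] at hx
    obtain ⟨t, rfl⟩ := hx
    have hfix : (R.map (expand d).toRingHom).map (scale fun i ↦ t i).toRingHom =
        R.map (expand d).toRingHom := by
      rw [Polynomial.map_map]
      congr 1
      exact RingHom.ext (scale_expand _ fun i ↦ (t i).2)
    have heval := Polynomial.eval_map_apply (p := R.map (expand d).toRingHom)
      (f := (scale fun i ↦ (t i : Kˣ)).toRingHom) p
    rw [hfix, h, map_zero] at heval
    exact heval
  · rw [← Set.ncard_eq_toFinset_card _ (finite_scaleOrbit d p)]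
    exact Polynomial.natDegree_map_le.trans_lt hR

end Orbit

theorem aeval_cons_X_pow {n : ℕ} (d : ℕ) (p : MvPolynomial (Fin n) K)
    (Q : MvPolynomial (Fin (n + 1)) K) :
    aeval (Fin.cons p fun i ↦ X i ^ d : Fin (n + 1) → MvPolynomial (Fin n) K) Q =
      ((finSuccEquiv K n Q).map (expand d).toRingHom).eval p := by
  have hcomp : aeval (Fin.cons p fun i ↦ X i ^ d : Fin (n + 1) → MvPolynomial (Fin n) K) =
      ((Polynomial.aeval p).restrictScalars K).comp
        ((Polynomial.mapAlgHom (expand d)).comp (finSuccEquiv K n).toAlgHom) := by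
    refine algHom_ext fun i ↦ ?_
    cases i using Fin.cases <;> simp [finSuccEquiv_X_zero, finSuccEquiv_X_succ]
  rw [hcomp]
  simp [Polynomial.eval_map]

section Relation

variable [IsDomain K] {n d : ℕ} [NeZero d]

theorem ker_aeval_cons_X_pow {p : MvPolynomial (Fin n) K} {P : (MvPolynomial (Fin n) K)[X]}
    (hP : P.Monic) (hPmap : P.map (expand d).toRingHom = scaleOrbitPoly d p) :
    RingHom.ker (aeval (Fin.cons p fun i ↦ X i ^ d : Fin (n + 1) → MvPolynomial (Fin n) K)) =
      Ideal.span {(finSuccEquiv K n).symm P} := by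
  ext Q
  rw [RingHom.mem_ker, Ideal.mem_span_singleton, aeval_cons_X_pow,
    ← (finSuccEquiv K n).symm_apply_apply Q, map_dvd_iff, AlgEquiv.apply_symm_apply]
  constructor
  · intro hQ
    have hPdeg : P.natDegree = (scaleOrbit d p).ncard := by
      rw [← natDegree_scaleOrbitPoly, ← hPmap, hP.natDegree_map]
    have hP1 : P ≠ 1 := by
      have := (Set.ncard_pos (finite_scaleOrbit d p)).2 ⟨p, self_mem_scaleOrbit d p⟩
      rintro rfl
      rw [Polynomial.natDegree_one] at hPdeg
      omega
    rw [← Polynomial.modByMonic_eq_zero_iff_dvd hP]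
    refine eq_zero_of_eval_map_expand_eq_zero
      (hPdeg ▸ Polynomial.natDegree_modByMonic_lt _ hP hP1) ?_
    rw [Polynomial.map_modByMonic _ hP, hPmap, Polynomial.modByMonic_eq_sub_mul_div,
      Polynomial.eval_sub, Polynomial.eval_mul, eval_scaleOrbitPoly_self, zero_mul, sub_zero, hQ]
  · rintro ⟨c, hc⟩
    rw [hc, Polynomial.map_mul, Polynomial.eval_mul, hPmap, eval_scaleOrbitPoly_self, zero_mul]

theorem exists_irreducible_isHomogeneous_ker_aeval_cons_X_pow {ζ : K} (hζ : IsPrimitiveRoot ζ d)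
    {p : MvPolynomial (Fin n) K} (hp : p.IsHomogeneous d) :
    ∃ P : MvPolynomial (Fin (n + 1)) K,
      Irreducible P ∧ P.IsHomogeneous (scaleOrbit d p).ncard ∧
      RingHom.ker (aeval (Fin.cons p fun i ↦ X i ^ d : Fin (n + 1) → MvPolynomial (Fin n) K)) =
        Ideal.span {P} := by
  obtain ⟨P, hPmap, hPdeg, hP⟩ := Polynomial.lifts_and_natDegree_eq_and_monic
    (scaleOrbitPoly_mem_lifts hζ p) (scaleOrbitPoly_monic p)
  rw [natDegree_scaleOrbitPoly] at hPdeg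
  have hker := ker_aeval_cons_X_pow hP hPmap
  have hP0 : (finSuccEquiv K n).symm P ≠ 0 := by simpa using hP.ne_zero
  refine ⟨_, ((Ideal.span_singleton_prime hP0).1 (hker ▸ RingHom.ker_isPrime _)).irreducible,
    isHomogeneous_of_coeff_finSuccEquiv (by simp [hPdeg]) fun j ↦ ?_, hker⟩
  rw [AlgEquiv.apply_symm_apply]
  refine IsHomogeneous.of_expand (NeZero.ne d) ?_
  have hcoeff := Polynomial.coeff_map (expand d).toRingHom (p := P) j
  rw [hPmap] at hcoeff
  exact hcoeff ▸ isHomogeneous_coeff_scaleOrbitPoly hp j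

end Relation

section StarForm

variable (K) in
noncomputable def starForm (m d : ℕ) : MvPolynomial (Fin (m + 1)) K :=
  X 0 ^ (d - 1) * ∑ i : Fin m, X i.succ

variable {m d : ℕ} [NeZero d]

theorem isHomogeneous_starForm : (starForm K m d).IsHomogeneous d := by
  have h := (isHomogeneous_X_pow (R := K) (0 : Fin (m + 1)) (d - 1)).mul
    (IsHomogeneous.sum Finset.univ (fun i : Fin m ↦ X i.succ) 1 fun i _ ↦ isHomogeneous_X K _)
  rwa [Nat.sub_add_cancel NeZero.one_le] at h

theorem scale_starForm (t : Fin (m + 1) → Kˣ) (ht : t 0 ^ d = 1) :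
    scale t (starForm K m d) =
      X 0 ^ (d - 1) * ∑ i : Fin m, (((t 0)⁻¹ * t i.succ : Kˣ) : K) • X i.succ := by
  have hinv : t 0 ^ (d - 1) = (t 0)⁻¹ :=
    eq_inv_of_mul_eq_one_left (by rw [← pow_succ, Nat.sub_add_cancel NeZero.one_le, ht])
  simp only [starForm, scale, map_mul, map_pow, map_sum, aeval_X, smul_pow, Finset.mul_sum,
    smul_mul_smul, Units.val_mul]
  simp_rw [← Units.val_pow_eq_pow_val, hinv, mul_smul_comm]

theorem scaleOrbit_starForm :
    scaleOrbit d (starForm K m d) = Set.range fun c : Fin m → rootsOfUnity d K ↦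
      X 0 ^ (d - 1) * ∑ i, ((c i : Kˣ) : K) • X i.succ := by
  ext x
  constructor
  · rintro ⟨t, rfl⟩
    refine ⟨fun i ↦ (t 0)⁻¹ * t i.succ, ?_⟩
    dsimp only
    rw [scale_starForm (fun i ↦ (t i : Kˣ)) (t 0).2]
    rfl
  · rintro ⟨c, rfl⟩
    refine ⟨Fin.cons 1 c, ?_⟩
    dsimp only
    rw [scale_starForm _ (by simp)]
    simp

theorem ncard_scaleOrbit_starForm [IsDomain K] {ζ : K} (hζ : IsPrimitiveRoot ζ d) :
    (scaleOrbit d (starForm K m d)).ncard = d ^ m := by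
  rw [scaleOrbit_starForm, Set.ncard_range_of_injective, Nat.card_fun, hζ.card_rootsOfUnity,
    Nat.card_fin]
  intro c c' h
  have h' := mul_left_cancel₀ (pow_ne_zero _ (X_ne_zero 0)) h
  funext i
  have := congrArg (eval (Pi.single i.succ 1)) h'
  simp only [map_sum, smul_eval, eval_X, Pi.single_apply, Fin.succ_inj, mul_ite, mul_one,
    mul_zero, Finset.sum_ite_eq', Finset.mem_univ, ↓reduceIte] at this
  exact Subtype.ext (Units.ext this)

end StarForm

end MvPolynomial

theorem stmt_3 (n d : ℕ) (hn : 2 ≤ n) (hd : 2 ≤ d) :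
    ∃ f : Fin (n + 1) → MvPolynomial (Fin n) ℂ,
      (∀ i, (f i).IsHomogeneous d) ∧
      ∃ P : MvPolynomial (Fin (n + 1)) ℂ,
        Irreducible P ∧ P.IsHomogeneous (d ^ (n - 1)) ∧
        RingHom.ker (MvPolynomial.aeval f : MvPolynomial (Fin (n + 1)) ℂ →ₐ[ℂ] MvPolynomial (Fin n) ℂ)
          = Ideal.span {P} ∧
        (∀ (e : ℕ) (Q : MvPolynomial (Fin (n + 1)) ℂ),
          Q.IsHomogeneous e → e < d ^ (n - 1) → Q ≠ 0 → MvPolynomial.aeval f Q ≠ 0) := by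
  obtain ⟨m, rfl⟩ : ∃ m, n = m + 1 := ⟨n - 1, by omega⟩
  have : NeZero d := ⟨by omega⟩
  have hζ : IsPrimitiveRoot (Complex.exp (2 * Real.pi * Complex.I / d)) d :=
    Complex.isPrimitiveRoot_exp d (NeZero.ne d)
  obtain ⟨P, hirr, hhom, hker⟩ :=
    exists_irreducible_isHomogeneous_ker_aeval_cons_X_pow hζ (isHomogeneous_starForm (m := m))
  rw [ncard_scaleOrbit_starForm hζ] at hhom
  rw [Nat.add_sub_cancel]
  refine ⟨Fin.cons (starForm ℂ m d) fun i ↦ X i ^ d, Fin.cases isHomogeneous_starForm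
    fun i ↦ isHomogeneous_X_pow i d, P, hirr, hhom, hker, fun e Q hQ he hQ0 hQker ↦ ?_⟩
  have hPQ : P ∣ Q := Ideal.mem_span_singleton.1 (hker ▸ RingHom.mem_ker.2 hQker)
  exact he.not_ge (hhom.le_of_dvd hQ hQ0 hPQ)
end

section
/- Let n ≥ 1 and d ≥ 2 be integers, let μ_d ⊂ C be the set of d-th roots of unity, and let F = ∏_{(ε_1,...,ε_n) ∈ μ_d^n} (x_1 + ε_1 x_2 + ε_2 x_3 + ... + ε_n x_{n+1}) in C[x_1,...,x_{n+1}] (a homogeneous polynomial of degree d^n). Then F lies in the ideal (x_1^d, x_2^d, ..., x_{n+1}^d)^{d^{n−1}}; equivalently, F = 0 in the quotient ring C[x_1,...,x_{n+1}]/(x_1^d,...,x_{n+1}^d)^{d^{n−1}}. -/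
/-!
Substituting `x_{i+1} ↦ ζ x_{i+1}`, for `ζ` a primitive `d`-th root of unity, only permutes the
factors of `F`, so `F` is invariant and every monomial of `F` has its `x_{i+1}`-exponent divisible
by `d`. As `F` is homogeneous of degree `d ^ n`, the `x_1`-exponent is divisible by `d` too, so every
monomial of `F` is a product of `d ^ (n - 1)` of the generators `x_j ^ d`.
-/

open MvPolynomial

namespace MvPolynomial

variable {R σ : Type*}

theorem coeff_aeval_C_mul_X [CommSemiring R] (c : σ → R) (p : MvPolynomial σ R) (m : σ →₀ ℕ) :
    coeff m (aeval (fun i => C (c i) * X i) p) = (m.prod fun i k => c i ^ k) * coeff m p := by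
  induction p using MvPolynomial.induction_on' with
  | add p q hp hq => rw [map_add, coeff_add, hp, hq, coeff_add, mul_add]
  | monomial m' a =>
    have hmono : aeval (fun i => C (c i) * X i) (monomial m' a)
        = monomial m' ((m'.prod fun i k => c i ^ k) * a) := by
      rw [aeval_monomial, algebraMap_eq, monomial_eq, C_mul, mul_assoc]
      simp only [mul_pow, Finsupp.prod_mul, ← map_pow, ← map_finsuppProd]
      ring
    classical
    rw [hmono, coeff_monomial, coeff_monomial]
    split_ifs with h
    · rw [h]
    · rw [mul_zero]

theorem dvd_of_coeff_ne_zero_of_aeval_mulSingle_eq [CommRing R] [IsDomain R] [DecidableEq σ]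
    {ζ : R} {d : ℕ} (hζ : IsPrimitiveRoot ζ d) {p : MvPolynomial σ R} (j : σ)
    (hp : aeval (fun i => C ((Pi.mulSingle j ζ : σ → R) i) * X i) p = p) {m : σ →₀ ℕ}
    (hm : coeff m p ≠ 0) : d ∣ m j := by
  have hcoeff := coeff_aeval_C_mul_X (Pi.mulSingle j ζ) p m
  rw [hp, Finsupp.prod_eq_single j (fun i _ hij => by simp [hij]) (by simp),
    Pi.mulSingle_eq_same] at hcoeff
  refine (hζ.pow_eq_one_iff_dvd _).1 (mul_right_cancel₀ hm ?_)
  rw [← hcoeff, one_mul]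

theorem IsHomogeneous.degree_eq_of_coeff_ne_zero [CommSemiring R] {p : MvPolynomial σ R} {n : ℕ}
    (hp : p.IsHomogeneous n) {m : σ →₀ ℕ} (hm : coeff m p ≠ 0) : m.degree = n :=
  of_not_not (mt hp.coeff_eq_zero hm)

theorem monomial_mem_span_X_pow_pow [CommSemiring R] {d k : ℕ} (hd : 0 < d) {m : σ →₀ ℕ}
    (hdvd : ∀ i, d ∣ m i) (hdeg : m.degree = d * k) (a : R) :
    monomial m a ∈ Ideal.span (Set.range fun i => (X i : MvPolynomial σ R) ^ d) ^ k := by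
  have hk : ∑ i ∈ m.support, m i / d = k := by
    refine Nat.eq_of_mul_eq_mul_left hd ?_
    rw [Finset.mul_sum, ← hdeg, Finsupp.degree]
    exact Finset.sum_congr rfl fun i _ => Nat.mul_div_cancel' (hdvd i)
  have hprod : (m.prod fun i k => (X i : MvPolynomial σ R) ^ k)
      = ∏ i ∈ m.support, ((X i : MvPolynomial σ R) ^ d) ^ (m i / d) :=
    Finset.prod_congr rfl fun i _ => by rw [← pow_mul, Nat.mul_div_cancel' (hdvd i)]
  rw [monomial_eq, hprod, ← hk, ← Finset.prod_pow_eq_pow_sum]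
  exact Ideal.mul_mem_left _ _ (Ideal.prod_mem_prod fun i _ =>
    Ideal.pow_mem_pow (Ideal.subset_span (Set.mem_range_self i)) _)

theorem mem_span_X_pow_pow_of_isHomogeneous [CommSemiring R] {d k : ℕ} (hd : 0 < d)
    {p : MvPolynomial σ R} (hp : p.IsHomogeneous (d * k))
    (hdvd : ∀ m ∈ p.support, ∀ i, d ∣ m i) :
    p ∈ Ideal.span (Set.range fun i => (X i : MvPolynomial σ R) ^ d) ^ k := by
  rw [p.as_sum]
  exact Ideal.sum_mem _ fun m hm => monomial_mem_span_X_pow_pow hd (hdvd m hm)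
    (hp.degree_eq_of_coeff_ne_zero (mem_support_iff.1 hm)) _

end MvPolynomial

theorem Finsupp.dvd_apply_of_dvd_degree {σ : Type*} {d : ℕ} {m : σ →₀ ℕ}
    (hdeg : d ∣ m.degree) (j : σ) (hdvd : ∀ i ≠ j, d ∣ m i) : d ∣ m j := by
  classical
  have hsplit : m.degree = m j + (m.erase j).degree := by
    rw [← degree_single j (m j), ← map_add, single_add_erase]
  have hrest : d ∣ (m.erase j).degree := Finset.dvd_sum fun i hi => by
    rw [support_erase] at hi
    have hij : i ≠ j := (Finset.mem_erase.1 hi).1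
    rw [erase_ne hij]
    exact hdvd i hij
  rw [hsplit] at hdeg
  exact (Nat.dvd_add_left hrest).1 hdeg

theorem Fintype.prod_piFinset_comp_units_mul {ι α M : Type*} [DecidableEq ι] [Fintype ι]
    [Monoid α] [CommMonoid M] (s : ι → Finset α) (u : ι → αˣ)
    (hu : ∀ i a, (u i : α) * a ∈ s i ↔ a ∈ s i) (f : (ι → α) → M) :
    ∏ ε ∈ Fintype.piFinset s, f (fun i => u i * ε i) = ∏ ε ∈ Fintype.piFinset s, f ε :=
  Finset.prod_equiv (Equiv.piCongrRight fun i => Units.mulLeft (u i))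
    (by simp [Fintype.mem_piFinset, hu]) (fun _ _ => rfl)

section RootForm

variable {R : Type*} {n : ℕ}

noncomputable def rootForm [CommSemiring R] (ε : Fin n → R) : MvPolynomial (Fin (n + 1)) R :=
  X 0 + ∑ i, C (ε i) * X i.succ

theorem isHomogeneous_prod_rootForm [CommSemiring R] (s : Finset (Fin n → R)) :
    (∏ ε ∈ s, rootForm ε).IsHomogeneous s.card := by
  simpa using IsHomogeneous.prod s rootForm (fun _ => 1) fun ε _ =>
    (isHomogeneous_X _ _).add (IsHomogeneous.sum _ _ _ fun i _ => (isHomogeneous_X _ _).C_mul _)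

theorem aeval_mulSingle_succ_rootForm [CommSemiring R] (ε : Fin n → R) (j : Fin n) (ζ : R) :
    aeval (fun i => C ((Pi.mulSingle j.succ ζ : Fin (n + 1) → R) i) * X i) (rootForm ε)
      = rootForm (Pi.mulSingle j ζ * ε) := by
  have h0 : (0 : Fin (n + 1)) ≠ j.succ := (Fin.succ_ne_zero j).symm
  simp only [rootForm, map_add, map_sum, map_mul, aeval_X, aeval_C, algebraMap_eq,
    Pi.mulSingle_apply, if_neg h0, map_one, one_mul, Fin.succ_inj, Pi.mul_apply]
  refine congrArg _ (Finset.sum_congr rfl fun i _ => ?_)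
  split_ifs <;> ring

theorem aeval_mulSingle_succ_prod_rootForm [CommRing R] [IsDomain R] {d : ℕ} (hd : 0 < d)
    {ζ : R} (hζ : ζ ^ d = 1) (j : Fin n) :
    aeval (fun i => C ((Pi.mulSingle j.succ ζ : Fin (n + 1) → R) i) * X i)
        (∏ ε ∈ Fintype.piFinset fun _ => Polynomial.nthRootsFinset d (1 : R), rootForm ε)
      = ∏ ε ∈ Fintype.piFinset fun _ => Polynomial.nthRootsFinset d (1 : R), rootForm ε := by
  set u : Rˣ := Units.ofPowEqOne ζ d hζ hd.ne'
  have hu : Pi.mulSingle j ζ = fun i => ((Pi.mulSingle j u : Fin n → Rˣ) i : R) := by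
    ext i
    by_cases hi : i = j <;> simp [hi, u]
  simp only [map_prod, aeval_mulSingle_succ_rootForm, hu]
  refine Fintype.prod_piFinset_comp_units_mul _ _ (fun i a => ?_) rootForm
  have hui : (((Pi.mulSingle j u : Fin n → Rˣ) i : Rˣ) : R) ^ d = 1 := by
    by_cases hi : i = j <;> simp [hi, u, hζ]
  rw [Polynomial.mem_nthRootsFinset hd, Polynomial.mem_nthRootsFinset hd, mul_pow, hui, one_mul]

end RootForm

theorem stmt_4 (n d : ℕ) (hn : 1 ≤ n) (hd : 2 ≤ d) :
    (∏ ε ∈ Fintype.piFinset (fun _ : Fin n => Polynomial.nthRootsFinset d (1 : ℂ)),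
        ((X 0 : MvPolynomial (Fin (n + 1)) ℂ) + ∑ i : Fin n, C (ε i) * X i.succ))
      ∈ (Ideal.span (Set.range fun i : Fin (n + 1) =>
          (X i : MvPolynomial (Fin (n + 1)) ℂ) ^ d)) ^ (d ^ (n - 1)) := by
  obtain ⟨ζ, hζ⟩ : ∃ ζ : ℂ, IsPrimitiveRoot ζ d := ⟨_, Complex.isPrimitiveRoot_exp d (by omega)⟩
  set S := Fintype.piFinset fun _ : Fin n => Polynomial.nthRootsFinset d (1 : ℂ)
  change (∏ ε ∈ S, rootForm ε) ∈ _
  have hcard : S.card = d * d ^ (n - 1) := by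
    rw [← pow_succ', Nat.sub_add_cancel hn, Fintype.card_piFinset, hζ.card_nthRootsFinset,
      Finset.prod_const, Finset.card_univ, Fintype.card_fin]
  have hhom := isHomogeneous_prod_rootForm S
  rw [hcard] at hhom
  refine mem_span_X_pow_pow_of_isHomogeneous (by omega) hhom fun m hm => ?_
  have hcoeff : coeff m (∏ ε ∈ S, rootForm ε) ≠ 0 := mem_support_iff.1 hm
  have hsucc (i : Fin n) : d ∣ m i.succ := dvd_of_coeff_ne_zero_of_aeval_mulSingle_eq hζ i.succ
    (aeval_mulSingle_succ_prod_rootForm (by omega) hζ.pow_eq_one i) hcoeff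
  have hdeg : d ∣ m.degree := hhom.degree_eq_of_coeff_ne_zero hcoeff ▸ dvd_mul_right _ _
  refine Fin.cases (Finsupp.dvd_apply_of_dvd_degree hdeg 0 fun i hi => ?_) hsucc
  obtain ⟨i, rfl⟩ := Fin.exists_succ_eq.2 hi
  exact hsucc i
end

section
/- Let n ≥ 2 and d ≥ 2 be integers, let μ_d ⊂ C be the set of d-th roots of unity, and let F = ∏_{(ε_1,...,ε_n) ∈ μ_d^n} (x_1 + ε_1 x_2 + ... + ε_n x_{n+1}) in C[x_1,...,x_{n+1}]. Then F is a symmetric polynomial: it is invariant under every permutation of the variables x_1, ..., x_{n+1}. -/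
/-!
Write `L η = ∑ⱼ ηⱼ xⱼ` and let `P_l` be the product of the `L η` over the tuples `η` of `d`-th
roots of unity with `η_l = 1`, so that `F = P_0`. A permutation `σ` of the variables maps `P_l` to
`P_{σ l}`, so it suffices that all `P_l` agree. Rescaling `η ↦ η_k⁻¹ η` is a bijection from the
tuples of `P_l` to those of `P_k`, and `L η = η_k · L (η_k⁻¹ η)`, hence `P_l = (∏ η_k) · P_k`.
The scalar is `1`: since `n ≥ 2` there is a third, unconstrained coordinate, so every value of
`η_k` occurs a multiple of `d` times, and it is a `d`-th root of unity.
-/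

open MvPolynomial Finset

theorem Fintype.prod_piFinset_apply_eq_one {ι M : Type*} [Fintype ι] [DecidableEq ι]
    [CommMonoid M] [DecidableEq M] (t : ι → Finset M) {k m : ι} (hmk : m ≠ k)
    (ht : ∀ b ∈ t k, b ^ #(t m) = 1) :
    ∏ η ∈ Fintype.piFinset t, η k = 1 := by
  refine (prod_comp id fun η : ι → M => η k).trans (Finset.prod_eq_one fun b hb => ?_)
  obtain ⟨η, hη, rfl⟩ := mem_image.1 hb
  have hηk := Fintype.mem_piFinset.1 hη k
  obtain ⟨q, hq⟩ := dvd_prod_of_mem (fun j => #(t j)) (mem_erase.2 ⟨hmk, mem_univ m⟩)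
  rw [Fintype.card_filter_piFinset_eq_of_mem t k hηk, hq, pow_mul, id, ht _ hηk, one_pow]

section LinearForm

variable {ι K : Type*} [Fintype ι] [Field K]

noncomputable def linearForm (η : ι → K) : MvPolynomial ι K :=
  ∑ j, C (η j) * X j

lemma C_mul_linearForm (a : K) (η : ι → K) : C a * linearForm η = linearForm (a • η) := by
  simp [linearForm, mul_sum, mul_assoc]

lemma rename_linearForm (σ : Equiv.Perm ι) (η : ι → K) :
    rename σ (linearForm η) = linearForm (η ∘ σ.symm) := by
  simp only [linearForm, map_sum, map_mul, rename_C, rename_X]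
  exact Fintype.sum_equiv σ _ _ fun j => by simp

variable [DecidableEq ι] [DecidableEq K]

def anchoredTuples (S : Finset K) (l : ι) : Finset (ι → K) :=
  {η ∈ Fintype.piFinset fun _ => S | η l = 1}

@[simp]
lemma mem_anchoredTuples {S : Finset K} {l : ι} {η : ι → K} :
    η ∈ anchoredTuples S l ↔ (∀ j, η j ∈ S) ∧ η l = 1 := by
  simp [anchoredTuples]

lemma rename_prod_anchoredTuples (S : Finset K) (σ : Equiv.Perm ι) (l : ι) :
    rename σ (∏ η ∈ anchoredTuples S l, linearForm η)
      = ∏ η ∈ anchoredTuples S (σ l), linearForm η := by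
  rw [map_prod]
  refine prod_equiv (σ.arrowCongr (Equiv.refl K)) (fun η => ?_) fun η _ => rename_linearForm σ η
  simpa using fun _ => (σ.symm.forall_congr_right (q := (η · ∈ S))).symm

lemma prod_anchoredTuples_inv_smul {M : Type*} [CommMonoid M] {S : Finset K}
    (hS : ∀ a ∈ S, ∀ b ∈ S, a⁻¹ * b ∈ S) (hS0 : (0 : K) ∉ S) (f : (ι → K) → M) (k l : ι) :
    ∏ η ∈ anchoredTuples S l, f ((η k)⁻¹ • η) = ∏ η ∈ anchoredTuples S k, f η := by
  have hne {η : ι → K} (hη : ∀ j, η j ∈ S) (j : ι) : η j ≠ 0 := ne_of_mem_of_not_mem (hη j) hS0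
  refine prod_nbij' (fun η => (η k)⁻¹ • η) (fun η => (η l)⁻¹ • η) ?_ ?_ ?_ ?_ fun _ _ => rfl
  · intro η hη
    obtain ⟨hη, -⟩ := mem_anchoredTuples.1 hη
    simp [hS _ (hη k) _ (hη _), inv_mul_cancel₀ (hne hη k)]
  · intro η hη
    obtain ⟨hη, -⟩ := mem_anchoredTuples.1 hη
    simp [hS _ (hη l) _ (hη _), inv_mul_cancel₀ (hne hη l)]
  · intro η hη
    obtain ⟨hη, hηl⟩ := mem_anchoredTuples.1 hη
    simp [hηl, smul_smul, mul_inv_cancel₀ (hne hη k)]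
  · intro η hη
    obtain ⟨hη, hηk⟩ := mem_anchoredTuples.1 hη
    simp [hηk, smul_smul, mul_inv_cancel₀ (hne hη l)]

lemma prod_linearForm_anchoredTuples_eq {S : Finset K} (hS1 : 1 ∈ S)
    (hS : ∀ a ∈ S, ∀ b ∈ S, a⁻¹ * b ∈ S) (hS_pow : ∀ a ∈ S, a ^ #S = 1) {k l m : ι}
    (hmk : m ≠ k) (hml : m ≠ l) :
    ∏ η ∈ anchoredTuples S l, linearForm η = ∏ η ∈ anchoredTuples S k, linearForm η := by
  rcases eq_or_ne k l with rfl | hkl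
  · rfl
  have hS0 : (0 : K) ∉ S := fun h0 => by
    simpa [(card_pos.2 ⟨0, h0⟩).ne'] using hS_pow 0 h0
  have hscalar : ∏ η ∈ anchoredTuples S l, η k = 1 := by
    rw [anchoredTuples,
      ← Fintype.piFinset_update_singleton_eq_filter_piFinset_eq (fun _ => S) l hS1]
    refine Fintype.prod_piFinset_apply_eq_one _ hmk fun b hb => ?_
    rw [Function.update_of_ne hkl] at hb
    rw [Function.update_of_ne hml]
    exact hS_pow b hb
  calc ∏ η ∈ anchoredTuples S l, linearForm η
      = ∏ η ∈ anchoredTuples S l, C (η k) * linearForm ((η k)⁻¹ • η) := by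
        refine prod_congr rfl fun η hη => ?_
        have hηk : η k ≠ 0 := ne_of_mem_of_not_mem ((mem_anchoredTuples.1 hη).1 k) hS0
        rw [C_mul_linearForm, smul_inv_smul₀ hηk]
    _ = C (∏ η ∈ anchoredTuples S l, η k)
          * ∏ η ∈ anchoredTuples S l, linearForm ((η k)⁻¹ • η) := by
        rw [map_prod, prod_mul_distrib]
    _ = ∏ η ∈ anchoredTuples S k, linearForm η := by
        rw [hscalar, map_one, one_mul, prod_anchoredTuples_inv_smul hS hS0]

theorem isSymmetric_prod_linearForm_anchoredTuples {S : Finset K} (hS1 : 1 ∈ S)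
    (hS : ∀ a ∈ S, ∀ b ∈ S, a⁻¹ * b ∈ S) (hS_pow : ∀ a ∈ S, a ^ #S = 1)
    (hι : 3 ≤ Fintype.card ι) (l : ι) :
    IsSymmetric (∏ η ∈ anchoredTuples S l, linearForm η) := by
  intro σ
  obtain ⟨m, -, hm⟩ := exists_mem_notMem_of_card_lt_card (s := {σ l, l}) (t := univ)
    (card_le_two.trans_lt (by rwa [card_univ]))
  simp only [mem_insert, mem_singleton, not_or] at hm
  rw [rename_prod_anchoredTuples, prod_linearForm_anchoredTuples_eq hS1 hS hS_pow hm.1 hm.2]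

end LinearForm

lemma prod_linearForm_anchoredTuples_zero {K : Type*} [Field K] [DecidableEq K] {S : Finset K}
    (hS1 : 1 ∈ S) (n : ℕ) :
    ∏ ε ∈ Fintype.piFinset (fun _ : Fin n => S),
        ((X 0 : MvPolynomial (Fin (n + 1)) K) + ∑ i : Fin n, C (ε i) * X i.succ)
      = ∏ η ∈ anchoredTuples S 0, linearForm η := by
  refine prod_nbij' (fun ε => Fin.cons (1 : K) ε) Fin.tail ?_ ?_ ?_ ?_ fun ε _ => ?_
  · intro ε hε
    simp only [Fintype.mem_piFinset] at hε
    simp [Fin.forall_fin_succ, hS1, hε]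
  · intro η hη
    simp only [mem_anchoredTuples] at hη
    simp [Fin.tail, hη.1]
  · intro ε _
    exact Fin.tail_cons _ _
  · intro η hη
    rw [← (mem_anchoredTuples.1 hη).2]
    exact Fin.cons_self_tail η
  · simp [linearForm, Fin.sum_univ_succ]

theorem stmt_6_general (n d : ℕ) (hn : 2 ≤ n) :
    MvPolynomial.IsSymmetric
      (∏ ε ∈ Fintype.piFinset (fun _ : Fin n => Polynomial.nthRootsFinset d (1 : ℂ)),
        ((X 0 : MvPolynomial (Fin (n + 1)) ℂ) + ∑ i : Fin n, C (ε i) * X i.succ)) := by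
  rcases Nat.eq_zero_or_pos d with rfl | hd
  · rw [Fintype.piFinset_eq_empty.2 ⟨⟨0, by omega⟩, Polynomial.nthRootsFinset_zero _⟩, prod_empty]
    exact IsSymmetric.one
  rw [prod_linearForm_anchoredTuples_zero (Polynomial.one_mem_nthRootsFinset hd)]
  refine isSymmetric_prod_linearForm_anchoredTuples (Polynomial.one_mem_nthRootsFinset hd)
    (fun a ha b hb => ?_) (fun a ha => ?_) (by rw [Fintype.card_fin]; omega) 0
  · rw [Polynomial.mem_nthRootsFinset hd] at ha hb ⊢
    rw [mul_pow, inv_pow, ha, hb, inv_one, one_mul]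
  · rw [(Complex.isPrimitiveRoot_exp d hd.ne').card_nthRootsFinset]
    exact (Polynomial.mem_nthRootsFinset hd 1).1 ha

theorem stmt_6 (n d : ℕ) (hn : 2 ≤ n) (hd : 2 ≤ d) :
    MvPolynomial.IsSymmetric
      (∏ ε ∈ Fintype.piFinset (fun _ : Fin n => Polynomial.nthRootsFinset d (1 : ℂ)),
        ((X 0 : MvPolynomial (Fin (n + 1)) ℂ) + ∑ i : Fin n, C (ε i) * X i.succ)) :=
  stmt_6_general n d hn
end

section
/- For every integer k ≥ 1, the algebra T_{3,2,k} = C[x,y,z]/(x^2, y^2, z^2)^k has the Weak Lefschetz Property. -/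
/-!
Take `L = x + y + z`. The ideal `(x², y², z²)ᵏ` is generated in degree `2k`, so up to degree
`2k - 1` the quotient coincides with the polynomial ring, a domain, and multiplication by `L` is
injective there. From degree `2k` on it is surjective: a monomial `x^a y^b z^c` of degree `≥ 2k`
lies in the ideal unless `⌊a/2⌋ + ⌊b/2⌋ + ⌊c/2⌋ = k - 1`, in which case two exponents, say `a`
and `b`, are odd. Then the monomial is `N·xy` with `N x²`, `N y²`, `N z²` in the ideal, and
`2xy = L·(x + y - z) - x² - y² + z²` makes it a multiple of `L` modulo the ideal.
-/

open MvPolynomial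

/-- The degree-`i` homogeneous component of the quotient `ℂ[x_1,…,x_n]/J`,
realized as the image of the space of homogeneous polynomials of degree `i`. -/
noncomputable def quotComp {n : ℕ} (J : Ideal (MvPolynomial (Fin n) ℂ)) (i : ℕ) :
    Submodule ℂ (MvPolynomial (Fin n) ℂ ⧸ J) :=
  Submodule.map (Ideal.Quotient.mkₐ ℂ J).toLinearMap (homogeneousSubmodule (Fin n) ℂ i)

/-- The graded algebra `ℂ[x_1,…,x_n]/J` has the Weak Lefschetz Property: there is a
linear form `L` such that for every `i`, multiplication by `L` from the degree-`i`
component to the degree-`(i+1)` component is injective or surjective. -/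
def hasWLP {n : ℕ} (J : Ideal (MvPolynomial (Fin n) ℂ)) : Prop :=
  ∃ L : MvPolynomial (Fin n) ℂ, L.IsHomogeneous 1 ∧ ∀ i : ℕ,
    (∀ x ∈ quotComp J i, Ideal.Quotient.mk J L * x = 0 → x = 0) ∨
    (∀ y ∈ quotComp J (i + 1), ∃ x ∈ quotComp J i, Ideal.Quotient.mk J L * x = y)

/-- The ideal `(x_1^d, …, x_n^d)^k` in `ℂ[x_1,…,x_n]`. -/
noncomputable def Tideal (n d k : ℕ) : Ideal (MvPolynomial (Fin n) ℂ) :=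
  (Ideal.span (Set.range fun i : Fin n => (X i : MvPolynomial (Fin n) ℂ) ^ d)) ^ k

open Finset

namespace MvPolynomial

variable {σ R : Type*} [CommSemiring R]

theorem homogeneousSubmodule_eq_span_monomial (n : ℕ) :
    homogeneousSubmodule σ R n = Submodule.span R ((monomial · 1) '' {s | s.degree = n}) := by
  simp [homogeneousSubmodule_eq_finsupp_supported, AddMonoidAlgebra.supported_eq_span_single,
    single_eq_monomial]

variable (σ R) in
def highDegreeIdeal (N : ℕ) : Ideal (MvPolynomial σ R) where
  carrier := {F | ∀ t ∈ F.support, N ≤ t.degree}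
  add_mem' {F G} hF hG t ht := by
    classical
    rcases mem_union.mp (support_add ht) with h | h
    exacts [hF t h, hG t h]
  zero_mem' := by simp
  smul_mem' c F hF t ht := by
    classical
    obtain ⟨u, -, v, hv, rfl⟩ := mem_add.mp (support_mul c F ht)
    rw [map_add]
    exact (hF v hv).trans (Nat.le_add_left _ _)

theorem highDegreeIdeal_mul_le (a b : ℕ) :
    highDegreeIdeal σ R a * highDegreeIdeal σ R b ≤ highDegreeIdeal σ R (a + b) := by
  classical
  refine Ideal.mul_le.mpr fun F hF G hG t ht => ?_
  obtain ⟨u, hu, v, hv, rfl⟩ := mem_add.mp (support_mul F G ht)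
  rw [map_add]
  exact Nat.add_le_add (hF u hu) (hG v hv)

theorem X_pow_mem_highDegreeIdeal (i : σ) (d : ℕ) : X i ^ d ∈ highDegreeIdeal σ R d := by
  classical
  intro t ht
  rw [X_pow_eq_monomial] at ht
  rw [mem_singleton.mp (support_monomial_subset ht), Finsupp.degree_single]

theorem IsHomogeneous.eq_zero_of_mem_highDegreeIdeal {F : MvPolynomial σ R} {m N : ℕ}
    (hF : F.IsHomogeneous m) (hm : m < N) (hFN : F ∈ highDegreeIdeal σ R N) : F = 0 := by
  ext t
  by_contra ht
  have hdeg : t.degree = m := by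
    rw [Finsupp.degree_eq_weight_one]
    exact hF ht
  exact absurd (hFN t (mem_support_iff.mpr ht)) (by omega)

end MvPolynomial

section Tideal

variable {n d k : ℕ}

theorem Tideal_le_highDegreeIdeal : Tideal n d k ≤ highDegreeIdeal (Fin n) ℂ (d * k) := by
  induction k with
  | zero => intro F _ t _; simp
  | succ k ih =>
    rw [Tideal, pow_succ, Nat.mul_succ]
    refine (Ideal.mul_mono ih ?_).trans (highDegreeIdeal_mul_le _ _)
    rw [Ideal.span_le]
    rintro _ ⟨i, rfl⟩
    exact X_pow_mem_highDegreeIdeal i d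

theorem X_pow_mul_mem_Tideal_succ {F : MvPolynomial (Fin n) ℂ} (hF : F ∈ Tideal n d k)
    (i : Fin n) : X i ^ d * F ∈ Tideal n d (k + 1) := by
  rw [Tideal, pow_succ']
  exact Ideal.mul_mem_mul (Ideal.subset_span ⟨i, rfl⟩) hF

theorem sum_tsub_single_div_add_one {t : Fin n →₀ ℕ} {i : Fin n} (hd : 0 < d) (hi : d ≤ t i) :
    ∑ m, (t - Finsupp.single i d) m / d + 1 = ∑ m, t m / d := by
  rw [← add_sum_erase _ _ (mem_univ i), ← add_sum_erase _ _ (mem_univ i)]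
  have hrest : ∑ m ∈ univ.erase i, (t - Finsupp.single i d) m / d = ∑ m ∈ univ.erase i, t m / d :=
    sum_congr rfl fun m hm => by simp [(ne_of_mem_erase hm).symm]
  rw [hrest]
  have : (t i - d) / d + 1 = t i / d := by
    rw [← Nat.add_div_right _ hd, Nat.sub_add_cancel hi]
  simp only [Finsupp.tsub_apply, Finsupp.single_eq_same]
  omega

theorem monomial_mem_Tideal {t : Fin n →₀ ℕ} (ht : k ≤ ∑ m, t m / d) (c : ℂ) :
    monomial t c ∈ Tideal n d k := by
  induction k generalizing t with
  | zero => simp [Tideal]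
  | succ k ih =>
    obtain ⟨i, -, hi⟩ := exists_ne_zero_of_sum_ne_zero (by omega : ∑ m, t m / d ≠ 0)
    obtain ⟨hd, hdi⟩ := Nat.div_pos_iff.mp (Nat.pos_of_ne_zero hi)
    have hsplit : monomial t c = X i ^ d * monomial (t - Finsupp.single i d) c := by
      rw [X_pow_eq_monomial, monomial_mul, one_mul, add_tsub_cancel_of_le]
      simpa using hdi
    rw [hsplit]
    refine X_pow_mul_mem_Tideal_succ (ih ?_) i
    have := sum_tsub_single_div_add_one hd hdi
    omega

theorem exists_mul_sub_monomial_mem_Tideal_of_odd {t : Fin n →₀ ℕ} {i j : Fin n} (hij : i ≠ j)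
    (hi : Odd (t i)) (hj : Odd (t j)) (hk : k ≤ ∑ m, t m / 2) (l : Fin n) :
    ∃ F : MvPolynomial (Fin n) ℂ, F.IsHomogeneous (t.degree - 1) ∧
      (X i + X j + X l) * F - monomial t 1 ∈ Tideal n 2 (k + 1) := by
  rw [Nat.odd_iff] at hi hj
  set N := t - Finsupp.single i 1 - Finsupp.single j 1
  have htN : t = N + Finsupp.single i 1 + Finsupp.single j 1 := by
    ext m
    simp only [N, Finsupp.add_apply, Finsupp.tsub_apply, Finsupp.single_apply]
    split_ifs <;> subst_vars <;> omega
  have hN : monomial N (1 : ℂ) ∈ Tideal n 2 k := by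
    refine monomial_mem_Tideal (hk.trans (sum_le_sum fun m _ => ?_)) 1
    simp only [N, Finsupp.tsub_apply, Finsupp.single_apply]
    split_ifs <;> subst_vars <;> omega
  refine ⟨C (1 / 2) * (monomial N 1 * (X i + X j - X l)), ?_, ?_⟩
  · have hdeg : t.degree = N.degree + 2 := by
      rw [htN, map_add, map_add, Finsupp.degree_single, Finsupp.degree_single]
    rw [hdeg, show N.degree + 2 - 1 = N.degree + 1 by omega]
    exact ((isHomogeneous_monomial 1 rfl).mul
      (((isHomogeneous_X ℂ i).add (isHomogeneous_X ℂ j)).sub (isHomogeneous_X ℂ l))).C_mul _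
  · have hmono : monomial t (1 : ℂ) = monomial N 1 * (X i * X j) := by
      rw [htN, X, X, monomial_mul, monomial_mul, mul_one, mul_one, add_assoc]
    have hhalf : (C (1 / 2) * 2 : MvPolynomial (Fin n) ℂ) = 1 := by
      rw [← map_ofNat C 2, ← C_mul]
      norm_num
    have key : (X i + X j + X l : MvPolynomial (Fin n) ℂ) *
          (C (1 / 2) * (monomial N 1 * (X i + X j - X l))) - monomial t 1 =
        C (1 / 2) * (X i ^ 2 * monomial N 1 + X j ^ 2 * monomial N 1 - X l ^ 2 * monomial N 1) := by
      rw [hmono]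
      linear_combination (monomial N 1 * X i * X j) * hhalf
    rw [key]
    exact Ideal.mul_mem_left _ _ (sub_mem (add_mem (X_pow_mul_mem_Tideal_succ hN i)
      (X_pow_mul_mem_Tideal_succ hN j)) (X_pow_mul_mem_Tideal_succ hN l))

theorem exists_mul_sub_monomial_mem_Tideal_three_two {t : Fin 3 →₀ ℕ} (ht : 2 * k ≤ t.degree) :
    ∃ F : MvPolynomial (Fin 3) ℂ, F.IsHomogeneous (t.degree - 1) ∧
      (X 0 + X 1 + X 2) * F - monomial t 1 ∈ Tideal 3 2 k := by
  by_cases hk : k ≤ ∑ m, t m / 2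
  · exact ⟨0, isHomogeneous_zero _ _ _, by simpa using neg_mem (monomial_mem_Tideal hk 1)⟩
  rw [Finsupp.degree_eq_sum, Fin.sum_univ_three] at ht
  rw [Fin.sum_univ_three] at hk
  obtain ⟨k, rfl⟩ : ∃ k', k = k' + 1 := ⟨k - 1, by omega⟩
  have hk' : k ≤ ∑ m, t m / 2 := by
    rw [Fin.sum_univ_three]
    omega
  -- a degree `≥ 2k` monomial outside the ideal has at least two odd exponents
  rcases (by omega : t 0 % 2 = 1 ∧ t 1 % 2 = 1 ∨ t 0 % 2 = 1 ∧ t 2 % 2 = 1 ∨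
      t 1 % 2 = 1 ∧ t 2 % 2 = 1) with ⟨h0, h1⟩ | ⟨h0, h2⟩ | ⟨h1, h2⟩
  · exact exists_mul_sub_monomial_mem_Tideal_of_odd (by decide) (Nat.odd_iff.mpr h0)
      (Nat.odd_iff.mpr h1) hk' 2
  · obtain ⟨F, hF, hJ⟩ := exists_mul_sub_monomial_mem_Tideal_of_odd (j := 2) (by decide)
      (Nat.odd_iff.mpr h0) (Nat.odd_iff.mpr h2) hk' 1
    exact ⟨F, hF, by rwa [add_right_comm] at hJ⟩
  · obtain ⟨F, hF, hJ⟩ := exists_mul_sub_monomial_mem_Tideal_of_odd (i := 1) (j := 2) (by decide)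
      (Nat.odd_iff.mpr h1) (Nat.odd_iff.mpr h2) hk' 0
    exact ⟨F, hF, by rwa [add_comm (X 1 + X 2), ← add_assoc] at hJ⟩

theorem eq_zero_of_mk_mul_eq_zero_of_lt {L : MvPolynomial (Fin n) ℂ} (hL : L.IsHomogeneous 1)
    (hL0 : L ≠ 0) {i : ℕ} (hi : i + 1 < d * k) {x : MvPolynomial (Fin n) ℂ ⧸ Tideal n d k}
    (hx : x ∈ quotComp (Tideal n d k) i) (hLx : Ideal.Quotient.mk _ L * x = 0) : x = 0 := by
  obtain ⟨F, hF, rfl⟩ := hx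
  rw [AlgHom.toLinearMap_apply, Ideal.Quotient.mkₐ_eq_mk, ← map_mul,
    Ideal.Quotient.eq_zero_iff_mem] at hLx
  have hLF : L * F = 0 :=
    (hL.mul hF).eq_zero_of_mem_highDegreeIdeal (by omega) (Tideal_le_highDegreeIdeal hLx)
  simp [(mul_eq_zero.mp hLF).resolve_left hL0]

theorem exists_mem_quotComp_mk_mul_eq_of_monomial {J : Ideal (MvPolynomial (Fin n) ℂ)}
    {L : MvPolynomial (Fin n) ℂ} {i : ℕ}
    (h : ∀ t : Fin n →₀ ℕ, t.degree = i + 1 →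
      ∃ F : MvPolynomial (Fin n) ℂ, F.IsHomogeneous i ∧ L * F - monomial t 1 ∈ J)
    {y : MvPolynomial (Fin n) ℂ ⧸ J} (hy : y ∈ quotComp J (i + 1)) :
    ∃ x ∈ quotComp J i, Ideal.Quotient.mk J L * x = y := by
  suffices quotComp J (i + 1) ≤ (quotComp J i).map (LinearMap.mulLeft ℂ (Ideal.Quotient.mk J L)) by
    simpa using this hy
  rw [quotComp, homogeneousSubmodule_eq_span_monomial, Submodule.map_span, Submodule.span_le]
  rintro _ ⟨_, ⟨t, ht, rfl⟩, rfl⟩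
  obtain ⟨F, hF, hJ⟩ := h t ht
  refine ⟨Ideal.Quotient.mk J F, ⟨F, hF, rfl⟩, ?_⟩
  simpa [← map_mul] using (Ideal.Quotient.mk_eq_mk_iff_sub_mem _ _).mpr hJ

end Tideal

theorem stmt_8_general (k : ℕ) : hasWLP (Tideal 3 2 k) := by
  have hL : (X 0 + X 1 + X 2 : MvPolynomial (Fin 3) ℂ).IsHomogeneous 1 :=
    ((isHomogeneous_X ℂ 0).add (isHomogeneous_X ℂ 1)).add (isHomogeneous_X ℂ 2)
  have hL0 : (X 0 + X 1 + X 2 : MvPolynomial (Fin 3) ℂ) ≠ 0 := by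
    intro h
    simpa using congrArg (eval ![1, 0, 0]) h
  refine ⟨X 0 + X 1 + X 2, hL, fun i => ?_⟩
  rcases lt_or_ge (i + 1) (2 * k) with hi | hi
  · exact .inl fun x hx => eq_zero_of_mk_mul_eq_zero_of_lt hL hL0 hi hx
  · refine .inr fun y hy => exists_mem_quotComp_mk_mul_eq_of_monomial (fun t ht => ?_) hy
    simpa [ht] using exists_mul_sub_monomial_mem_Tideal_three_two (k := k) (t := t) (by omega)

theorem stmt_8 (k : ℕ) (hk : 1 ≤ k) : hasWLP (Tideal 3 2 k) :=
  stmt_8_general k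
end

section
/- Let I be a homogeneous ideal in R = C[x_1,...,x_n] generated by homogeneous elements of degree d, and suppose x_i^d ∈ I for i = 1, ..., n. Let k ≥ 1 and let a ≥ d(n−1) be an integer such that the degree-a homogeneous component of R/I^k is zero. Then the degree-(a+d) homogeneous component of R/I^{k+1} is zero. -/
open MvPolynomial

private lemma deg_add {n : ℕ} (x y : Fin n →₀ ℕ) :
    (x + y).degree = x.degree + y.degree := by
  simp only [Finsupp.degree_eq_weight_one, map_add]

private lemma deg_single {n : ℕ} (i : Fin n) (d : ℕ) :
    (Finsupp.single i d).degree = d := by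
  simp only [Finsupp.degree_eq_weight_one, Finsupp.weight_apply]
  rw [Finsupp.sum_single_index] <;> simp

theorem stmt_12 (n d k a : ℕ) (I : Ideal (MvPolynomial (Fin n) ℂ))
    (hgen : ∃ S : Set (MvPolynomial (Fin n) ℂ),
      I = Ideal.span S ∧ ∀ f ∈ S, f.IsHomogeneous d)
    (hpow : ∀ i : Fin n, (X i : MvPolynomial (Fin n) ℂ) ^ d ∈ I)
    (hk : 1 ≤ k) (ha : d * (n - 1) ≤ a)
    (hzero : ∀ p : MvPolynomial (Fin n) ℂ, p.IsHomogeneous a → p ∈ I ^ k) :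
    ∀ p : MvPolynomial (Fin n) ℂ, p.IsHomogeneous (a + d) → p ∈ I ^ (k + 1) := by
  intro p hp
  -- Degenerate case: d = 0 with at least one variable forces I = ⊤.
  by_cases hd0 : d = 0 ∧ 0 < n
  · obtain ⟨hd, hn⟩ := hd0
    have h1 : (1 : MvPolynomial (Fin n) ℂ) ∈ I := by
      have := hpow ⟨0, hn⟩
      simpa [hd] using this
    have : I = ⊤ := Ideal.eq_top_iff_one _ |>.mpr h1
    simp [this, Ideal.top_pow]
  -- Degenerate case: n = 0 and a + d = 0 : then 1 ∈ I ^ k, so I = ⊤.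
  by_cases h00 : n = 0 ∧ a = 0
  · obtain ⟨hn, haa⟩ := h00
    have h1 : (1 : MvPolynomial (Fin n) ℂ) ∈ I ^ k := by
      apply hzero
      simpa [haa] using (isHomogeneous_one (Fin n) ℂ)
    have h1' : (1 : MvPolynomial (Fin n) ℂ) ∈ I :=
      Ideal.pow_le_self (by omega) h1
    have : I = ⊤ := Ideal.eq_top_iff_one _ |>.mpr h1'
    simp [this, Ideal.top_pow]
  -- Main case: decompose p into monomials.
  rw [p.as_sum]
  apply Submodule.sum_mem
  intro m hm
  have hc : coeff m p ≠ 0 := mem_support_iff.mp hm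
  have hdeg : m.degree = a + d := by
    rw [Finsupp.degree_eq_weight_one]; exact hp hc
  -- find a variable with exponent at least d
  have hex : ∃ i : Fin n, d ≤ m i := by
    by_contra hcon
    push_neg at hcon
    have hsum : m.degree ≤ ∑ i : Fin n, m i := by
      rw [Finsupp.degree]
      exact Finset.sum_le_sum_of_subset (Finset.subset_univ _)
    rcases Nat.eq_zero_or_pos n with hn | hn
    · subst hn
      simp only [Finset.univ_eq_empty, Finset.sum_empty, Nat.le_zero] at hsum
      omega
    · have hd : 1 ≤ d := by
        rcases Nat.eq_zero_or_pos d with h | h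
        · exact absurd ⟨h, hn⟩ hd0
        · exact h
      have hb : ∑ i : Fin n, m i ≤ n * (d - 1) := by
        calc ∑ i : Fin n, m i ≤ ∑ _i : Fin n, (d - 1) :=
              Finset.sum_le_sum (fun i _ => by have := hcon i; omega)
          _ = n * (d - 1) := by simp [Finset.sum_const, mul_comm]
      have e1 : d * (n - 1) + d = d * n := by
        have h1 : n - 1 + 1 = n := Nat.succ_pred_eq_of_pos hn
        calc d * (n - 1) + d = d * ((n - 1) + 1) := by ring
          _ = d * n := by rw [h1]
      have e2 : n * (d - 1) + n = n * d := by
        have h1 : d - 1 + 1 = d := Nat.succ_pred_eq_of_pos hd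
        calc n * (d - 1) + n = n * ((d - 1) + 1) := by ring
          _ = n * d := by rw [h1]
      have e3 : d * n = n * d := mul_comm d n
      omega
  obtain ⟨i, hi⟩ := hex
  have hle : Finsupp.single i d ≤ m := Finsupp.single_le_iff.mpr hi
  have heq : Finsupp.single i d + (m - Finsupp.single i d) = m :=
    add_tsub_cancel_of_le hle
  have hdeg' : (m - Finsupp.single i d).degree = a := by
    have := congrArg Finsupp.degree heq
    rw [deg_add, deg_single] at this
    omega
  have hmon : (monomial (m - Finsupp.single i d) (coeff m p)).IsHomogeneous a :=
    isHomogeneous_monomial _ hdeg'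
  have hsplit : (monomial m (coeff m p) : MvPolynomial (Fin n) ℂ) =
      monomial (m - Finsupp.single i d) (coeff m p) * X i ^ d := by
    rw [X_pow_eq_monomial, monomial_mul, mul_one, tsub_add_cancel_of_le hle]
  rw [hsplit, pow_succ]
  exact Ideal.mul_mem_mul (hzero _ hmon) (hpow i)
end

section
/- Let d ≥ 2 and let k be an integer with k ≥ max(d−3, 1). Then the Hilbert function of C[x,y]/(x^d, y^d, x^{d−1}y + xy^{d−1})^k is zero in degree dk+1; equivalently, the ideal (x^d, y^d, x^{d−1}y + xy^{d−1})^k contains every monomial of degree dk+1 in C[x,y]. -/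
open MvPolynomial

section helpers

variable {R : Type*} [CommRing R]

private lemma hlp1 (J : Ideal R) {x y : R} (hx : x ∈ J) (hy : y ∈ J) (c : R) (q j : ℕ) :
    c * (x ^ q * y ^ j) ∈ J ^ (q + j) := by
  rw [pow_add]
  exact Ideal.mul_mem_left _ _ (Ideal.mul_mem_mul (Ideal.pow_mem_pow hx q) (Ideal.pow_mem_pow hy j))

private lemma hlp2 (J : Ideal R) {x y g : R} (hx : x ∈ J) (hy : y ∈ J) (hg : g ∈ J)
    (c : R) (q j : ℕ) : c * (g * (x ^ q * y ^ j)) ∈ J ^ (q + j + 1) := by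
  rw [pow_succ]
  refine Ideal.mul_mem_left _ _ ?_
  rw [mul_comm g]
  exact Ideal.mul_mem_mul (by
    rw [pow_add]
    exact Ideal.mul_mem_mul (Ideal.pow_mem_pow hx q) (Ideal.pow_mem_pow hy j)) hg

/-- membership of "good" monomials -/
private lemma goodMem (u v : R) (e k A B : ℕ) (hAB : A + B = (e+2)*k + 1)
    (hgood : A % (e+2) ≤ 2 ∨ A % (e+2) = e+1) :
    u ^ A * v ^ B ∈ (Ideal.span {u^(e+2), v^(e+2), u^(e+1)*v + u*v^(e+1)}) ^ k := by
  set J := Ideal.span {u^(e+2), v^(e+2), u^(e+1)*v + u*v^(e+1)} with hJ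
  have hf1 : u^(e+2) ∈ J := Ideal.subset_span (by simp)
  have hf2 : v^(e+2) ∈ J := Ideal.subset_span (by simp)
  have hf3 : u^(e+1)*v + u*v^(e+1) ∈ J := Ideal.subset_span (by simp)
  have he3 : u^2 * v^(e+1) ∈ J := by
    have h : u^2 * v^(e+1) = u*(u^(e+1)*v + u*v^(e+1)) - v*(u^(e+2)) := by ring
    rw [h]
    exact sub_mem (Ideal.mul_mem_left _ _ hf3) (Ideal.mul_mem_left _ _ hf1)
  have he4 : u^(e+1) * v^2 ∈ J := by
    have h : u^(e+1) * v^2 = v*(u^(e+1)*v + u*v^(e+1)) - u*(v^(e+2)) := by ring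
    rw [h]
    exact sub_mem (Ideal.mul_mem_left _ _ hf3) (Ideal.mul_mem_left _ _ hf2)
  have hA' := Nat.div_add_mod A (e+2)
  obtain ⟨q, r, hA, hrlt, hgood'⟩ : ∃ q r, (e+2)*q + r = A ∧ r < e+2 ∧ (r ≤ 2 ∨ r = e+1) :=
    ⟨A / (e+2), A % (e+2), hA', Nat.mod_lt _ (by omega), hgood⟩
  have hqk : q ≤ k := by
    by_contra hcon
    have h2 : (e+2)*(k+1) ≤ (e+2)*q := Nat.mul_le_mul_left _ (by omega)
    have h3 : (e+2)*(k+1) = (e+2)*k + (e+2) := by ring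
    omega
  obtain ⟨j, hj⟩ : ∃ j, k = q + j := ⟨k - q, by omega⟩
  have hmul : (e+2)*k = (e+2)*q + (e+2)*j := by rw [hj, mul_add]
  have hcase : r = 0 ∨ r = 1 ∨ (r = e+1 ∧ 1 ≤ e) ∨ (r = 2 ∧ 2 ≤ e) := by omega
  rcases hcase with h0 | h1 | ⟨h2, he⟩ | ⟨h2, he⟩
  · -- r = 0 : A = (e+2)q, B = (e+2)j + 1
    have hAe : A = (e+2)*q := by omega
    have hB : B = (e+2)*j + 1 := by omega
    have heq : u ^ A * v ^ B = v * ((u^(e+2))^q * (v^(e+2))^j) := by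
      rw [hAe, hB]; simp only [pow_add, pow_mul, pow_one]; ring
    rw [heq, hj]
    exact hlp1 J hf1 hf2 v q j
  · -- r = 1
    have hAe : A = (e+2)*q + 1 := by omega
    have hB : B = (e+2)*j := by omega
    have heq : u ^ A * v ^ B = u * ((u^(e+2))^q * (v^(e+2))^j) := by
      rw [hAe, hB]; simp only [pow_add, pow_mul, pow_one]; ring
    rw [heq, hj]
    exact hlp1 J hf1 hf2 u q j
  · -- r = e+1
    have hj1 : 1 ≤ j := by
      by_contra h
      have hj0 : j = 0 := by omega
      rw [hj0, mul_zero] at hmul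
      omega
    obtain ⟨j', rfl⟩ : ∃ j', j = j' + 1 := ⟨j - 1, by omega⟩
    have hmul2 : (e+2)*(j'+1) = (e+2)*j' + (e+2) := by ring
    have hAe : A = (e+2)*q + (e+1) := by omega
    have hB : B = (e+2)*j' + 2 := by omega
    have heq : u ^ A * v ^ B = 1 * ((u^(e+1)*v^2) * ((u^(e+2))^q * (v^(e+2))^j')) := by
      rw [hAe, hB]; simp only [pow_add, pow_mul, pow_one]; ring
    rw [heq, hj, show q + (j'+1) = q + j' + 1 from by ring]
    exact hlp2 J hf1 hf2 he4 1 q j'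
  · -- r = 2
    have hj1 : 1 ≤ j := by
      by_contra h
      have hj0 : j = 0 := by omega
      rw [hj0, mul_zero] at hmul
      omega
    obtain ⟨j', rfl⟩ : ∃ j', j = j' + 1 := ⟨j - 1, by omega⟩
    have hmul2 : (e+2)*(j'+1) = (e+2)*j' + (e+2) := by ring
    have hAe : A = (e+2)*q + 2 := by omega
    have hB : B = (e+2)*j' + (e+1) := by omega
    have heq : u ^ A * v ^ B = 1 * ((u^2*v^(e+1)) * ((u^(e+2))^q * (v^(e+2))^j')) := by
      rw [hAe, hB]; simp only [pow_add, pow_mul, pow_one]; ring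
    rw [heq, hj, show q + (j'+1) = q + j' + 1 from by ring]
    exact hlp2 J hf1 hf2 he3 1 q j'

/-- main descent lemma -/
private lemma memD (u v : R) (e : ℕ) :
    ∀ k, ∀ r A B, A % (e+2) = r → A + B = (e+2)*k + 1 →
      (r ≤ 2 ∨ r = e+1 ∨ r*(e+1) ≤ B + 2*(e+1)) →
      u ^ A * v ^ B ∈ (Ideal.span {u^(e+2), v^(e+2), u^(e+1)*v + u*v^(e+1)}) ^ k := by
  intro k
  induction k with
  | zero =>
    intro r A B _ _ _
    simp [Ideal.one_eq_top]
  | succ k IH =>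
    intro r
    induction r using Nat.strong_induction_on with
    | _ r ih =>
      intro A B hmod hAB hguard
      by_cases hgood : A % (e+2) ≤ 2 ∨ A % (e+2) = e+1
      · exact goodMem u v e (k+1) A B hAB hgood
      · -- bad case : 3 ≤ r ≤ e
        rw [hmod] at hgood
        have hre : 3 ≤ r ∧ r ≤ e := by
          have : r < e + 2 := hmod ▸ Nat.mod_lt _ (by omega)
          omega
        obtain ⟨r', rfl⟩ : ∃ r', r = r' + 3 := ⟨r - 3, by omega⟩
        set J := Ideal.span {u^(e+2), v^(e+2), u^(e+1)*v + u*v^(e+1)} with hJ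
        have hf3 : u^(e+1)*v + u*v^(e+1) ∈ J := Ideal.subset_span (by simp)
        have hg : (r'+3)*(e+1) ≤ B + 2*(e+1) := by
          rcases hguard with h | h | h
          · omega
          · omega
          · exact h
        have hg3 : 3*(e+1) ≤ (r'+3)*(e+1) := Nat.mul_le_mul_right _ (by omega)
        have hBpos : e + 1 ≤ B := by omega
        have hApos : 3 ≤ A := le_trans (by omega : 3 ≤ r'+3) (hmod ▸ Nat.mod_le A (e+2))
        have hA' := Nat.div_add_mod A (e+2)
        rw [hmod] at hA'
        obtain ⟨q, hA⟩ : ∃ q, (e+2)*q + (r'+3) = A := ⟨A / (e+2), hA'⟩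
        obtain ⟨b, rfl⟩ : ∃ b, B = b + (e+1) := ⟨B - (e+1), by omega⟩
        have hkk : (e+2)*(k+1) = (e+2)*k + (e+2) := by ring
        have hA1 : A = ((e+2)*q + (r'+2)) + 1 := by omega
        rw [hA1]
        have key : u^(((e+2)*q + (r'+2))+1) * v^(b+(e+1))
            = (u^((e+2)*q + (r'+2)) * v^b) * (u^(e+1)*v + u*v^(e+1))
              - u^(((e+2)*q + (r'+2))+1+e) * v^(b+1) := by ring
    
        rw [key]
        have Emul : (r'+3)*(e+1) = (r'+2)*(e+1) + (e+1) := by ring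
        have Emul2 : (r'+3)*(e+1) = (r'+1)*(e+1) + 2*(e+1) := by ring
        refine sub_mem ?_ ?_
        · have hcof : u^((e+2)*q + (r'+2)) * v^b ∈ J ^ k := by
            refine IH (r'+2) _ b ?_ (by omega) (by right; right; omega)
            rw [Nat.mul_add_mod, Nat.mod_eq_of_lt (by omega)]
          have hh := Ideal.mul_mem_mul hcof hf3
          rwa [← pow_succ] at hh
        · refine ih (r'+1) (by omega) ((e+2)*q + (r'+2)+1+e) (b+1) ?_ (by omega)
            (by right; right; omega)
          have hrewr : (e+2)*q + (r'+2)+1+e = (e+2)*(q+1) + (r'+1) := by ring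
          rw [hrewr, Nat.mul_add_mod, Nat.mod_eq_of_lt (by omega)]

/-- one of the two symmetric guards always holds -/
private lemma guards (e k A B : ℕ) (hAB : A + B = (e+2)*k + 1) (hk : e ≤ k + 1) :
    (A % (e+2) ≤ 2 ∨ A % (e+2) = e+1 ∨ (A % (e+2))*(e+1) ≤ B + 2*(e+1)) ∨
    (B % (e+2) ≤ 2 ∨ B % (e+2) = e+1 ∨ (B % (e+2))*(e+1) ≤ A + 2*(e+1)) := by
  by_cases hgood : A % (e+2) ≤ 2 ∨ A % (e+2) = e+1
  · left; tauto
  · have hA' := Nat.div_add_mod A (e+2)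
    obtain ⟨q, r, hA, hmodr⟩ : ∃ q r, (e+2)*q + r = A ∧ A % (e+2) = r :=
      ⟨A / (e+2), A % (e+2), hA', rfl⟩
    have hrlt : r < e + 2 := hmodr ▸ Nat.mod_lt _ (by omega)
    have hre : 3 ≤ r ∧ r ≤ e := by omega
    have hqk : q + 1 ≤ k := by
      by_contra hcon
      have h2 : (e+2)*k ≤ (e+2)*q := Nat.mul_le_mul_left _ (by omega)
      omega
    obtain ⟨j, hj⟩ : ∃ j, k = q + 1 + j := ⟨k - q - 1, by omega⟩
    have hmul : (e+2)*k = (e+2)*q + (e+2)*j + (e+2) := by rw [hj]; ring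
    have hB : B = (e+2)*j + (e+3-r) := by omega
    have hs : B % (e+2) = e+3-r := by
      rw [hB, Nat.mul_add_mod, Nat.mod_eq_of_lt (by omega)]
    by_cases hgB : (A % (e+2))*(e+1) ≤ B + 2*(e+1)
    · left; right; right; exact hgB
    · right; right; right
      rw [hmodr] at hgB
      rw [hs]
      have hsum : r*(e+1) + (e+3-r)*(e+1) = (e+3)*(e+1) := by
        rw [← Nat.add_mul]; congr 1; omega
      have hexp : (e+3)*(e+1) = e*e + 4*e + 3 := by ring
      have hkge : (e+2)*(e-1) ≤ (e+2)*k := Nat.mul_le_mul_left _ (by omega)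
      have hexp2 : (e+2)*(e-1) + (e+2) = (e+2)*e := by
        rw [← Nat.mul_succ]; congr 1; omega
      have hexp3 : (e+2)*e = e*e + 2*e := by ring
      have hrle : r*(e+1) ≤ e*(e+1) := Nat.mul_le_mul_right _ (by omega)
      have hexp4 : e*(e+1) = e*e + e := by ring
      omega

end helpers

theorem stmt_15 (d k : ℕ) (hd : 2 ≤ d) (hk : max (d - 3) 1 ≤ k) :
    ∀ p : MvPolynomial (Fin 2) ℂ, p.IsHomogeneous (d * k + 1) →
      p ∈ (Ideal.span {(X 0 : MvPolynomial (Fin 2) ℂ) ^ d, (X 1 : MvPolynomial (Fin 2) ℂ) ^ d,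
            (X 0 : MvPolynomial (Fin 2) ℂ) ^ (d - 1) * X 1 + X 0 * X 1 ^ (d - 1)}) ^ k := by
  obtain ⟨e, rfl⟩ : ∃ e, d = e + 2 := ⟨d - 2, by omega⟩
  have hk1 : e ≤ k + 1 := by
    have h1 : e + 2 - 3 ≤ k := le_trans (le_max_left _ _) hk
    omega
  have hd1 : e + 2 - 1 = e + 1 := rfl
  rw [hd1]
  intro p hp
  rw [MvPolynomial.as_sum p]
  refine Ideal.sum_mem _ (fun m hm => ?_)
  have hsum : m 0 + m 1 = (e+2)*k + 1 := by
    have h2 := hp (MvPolynomial.mem_support_iff.mp hm)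
    rw [Finsupp.weight_apply, Finsupp.sum_fintype _ _ (fun i => by simp),
      Fin.sum_univ_two] at h2
    simpa using h2
  have hmono : (monomial m) (coeff m p)
      = C (coeff m p) * ((X 0 : MvPolynomial (Fin 2) ℂ)^(m 0) * (X 1)^(m 1)) := by
    rw [monomial_eq]
    congr 1
    rw [Finsupp.prod_fintype _ _ (fun i => pow_zero _), Fin.prod_univ_two]
  rw [hmono]
  refine Ideal.mul_mem_left _ _ ?_
  rcases guards e k (m 0) (m 1) hsum hk1 with hg | hg
  · exact memD (X 0 : MvPolynomial (Fin 2) ℂ) (X 1) e k _ (m 0) (m 1) rfl hsum hg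
  · have hmem := memD (X 1 : MvPolynomial (Fin 2) ℂ) (X 0) e k _ (m 1) (m 0) rfl (by omega) hg
    have hswap : Ideal.span {(X 1 : MvPolynomial (Fin 2) ℂ)^(e+2), (X 0)^(e+2),
        (X 1)^(e+1)*(X 0) + (X 1)*(X 0)^(e+1)}
        = Ideal.span {(X 0 : MvPolynomial (Fin 2) ℂ)^(e+2), (X 1)^(e+2),
        (X 0)^(e+1)*(X 1) + (X 0)*(X 1)^(e+1)} := by
      rw [show (X 1 : MvPolynomial (Fin 2) ℂ)^(e+1)*(X 0) + (X 1)*(X 0)^(e+1)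
          = (X 0)^(e+1)*(X 1) + (X 0)*(X 1)^(e+1) from by ring]
      rw [Set.insert_comm]
    rw [hswap] at hmem
    rwa [mul_comm ((X 1 : MvPolynomial (Fin 2) ℂ) ^ (m 1)) ((X 0) ^ (m 0))] at hmem
end

section
/- Let d ≥ 2 and n ≥ 2 be integers with (d,n) ≠ (2,2) and (d,n) ≠ (3,2). Then binomial(d^n + n − 1, n − 1) > binomial(d^{n−1} + n, n). -/
private lemma aux_L (j : ℕ) : ∀ c k : ℕ, c + j = k → (k+1)^j * c ≤ k^(j+1) := by
  induction j with
  | zero => intro c k h; simpa using h.le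
  | succ j ih =>
    intro c k h
    have ih' := ih (c+1) k (by omega)
    have h1 : (k+1)^(j+1) * c ≤ (k+1)^j * (c+1) * k := by
      have hck : c ≤ k := by omega
      have : (k+1) * c ≤ (c+1) * k := by nlinarith
      calc (k+1)^(j+1) * c = (k+1)^j * ((k+1)*c) := by ring
        _ ≤ (k+1)^j * ((c+1)*k) := Nat.mul_le_mul_left _ this
        _ = (k+1)^j * (c+1) * k := by ring
    calc (k+1)^(j+1) * c ≤ (k+1)^j * (c+1) * k := h1
      _ ≤ k^(j+1) * k := Nat.mul_le_mul_right _ ih'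
      _ = k^(j+2) := by ring

private lemma aux_M (k : ℕ) : ∀ a b : ℕ, b ≤ a →
    a^k * Nat.choose b k ≤ b^k * Nat.choose a k := by
  induction k with
  | zero => intro a b _; simp
  | succ k ih =>
    intro a b hba
    have key : a^(k+1) * Nat.choose b (k+1) * (k+1) ≤ b^(k+1) * Nat.choose a (k+1) * (k+1) := by
      have e1 : Nat.choose b (k+1) * (k+1) = Nat.choose b k * (b - k) := Nat.choose_succ_right_eq b k
      have e2 : Nat.choose a (k+1) * (k+1) = Nat.choose a k * (a - k) := Nat.choose_succ_right_eq a k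
      have hmul : a * (b - k) ≤ b * (a - k) := by
        rcases Nat.le_total b k with h | h
        · simp [Nat.sub_eq_zero_of_le h]
        · have hk : k ≤ a := le_trans h hba
          zify [h, hk]
          nlinarith [Nat.zero_le k]
      calc a^(k+1) * Nat.choose b (k+1) * (k+1)
          = a^(k+1) * (Nat.choose b (k+1) * (k+1)) := by ring
        _ = a^(k+1) * (Nat.choose b k * (b - k)) := by rw [e1]
        _ = (a * (b-k)) * (a^k * Nat.choose b k) := by ring
        _ ≤ (b * (a-k)) * (b^k * Nat.choose a k) :=
            Nat.mul_le_mul hmul (ih a b hba)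
        _ = b^(k+1) * (Nat.choose a k * (a - k)) := by ring
        _ = b^(k+1) * (Nat.choose a (k+1) * (k+1)) := by rw [e2]
        _ = b^(k+1) * Nat.choose a (k+1) * (k+1) := by ring
    exact Nat.le_of_mul_le_mul_right key (Nat.succ_pos k)

private lemma aux_G (m n : ℕ) (hn : 3 ≤ n) (hm : 4*n^2 ≤ m) :
    (m+1) * (m+n)^(n-1) < n * m^n := by
  set a := 4*n with ha
  set b := 4*n+1 with hb
  set c := 3*n+1 with hc
  have hL : b^(n-1) * c ≤ a^(n-1+1) := aux_L (n-1) c a (by omega)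
  have h1 : a^(n-1)*(m+n)^(n-1) ≤ b^(n-1)*m^(n-1) := by
    rw [← mul_pow, ← mul_pow]
    apply Nat.pow_le_pow_left
    show 4*n*(m+n) ≤ (4*n+1)*m
    nlinarith
  have h2 : (m+n)^(n-1) ≤ 2*m^(n-1) := by
    have hpos : 0 < a^(n-1) * c := by positivity
    apply Nat.le_of_mul_le_mul_left _ hpos
    calc a^(n-1) * c * (m+n)^(n-1)
        = (a^(n-1)*(m+n)^(n-1)) * c := by ring
      _ ≤ (b^(n-1)*m^(n-1)) * c := Nat.mul_le_mul_right _ h1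
      _ = (b^(n-1)*c) * m^(n-1) := by ring
      _ ≤ a^(n-1+1) * m^(n-1) := Nat.mul_le_mul_right _ hL
      _ = a^(n-1) * a * m^(n-1) := by rw [pow_succ]
      _ ≤ a^(n-1) * (2*c) * m^(n-1) := by
          refine Nat.mul_le_mul_right _ (Nat.mul_le_mul_left _ ?_)
          omega
      _ = a^(n-1) * c * (2*m^(n-1)) := by ring
  have hmn : m^n = m * m^(n-1) := by
    conv_lhs => rw [show n = 1 + (n-1) by omega]
    rw [pow_add, pow_one]
  calc (m+1) * (m+n)^(n-1) ≤ (m+1) * (2*m^(n-1)) := Nat.mul_le_mul_left _ h2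
    _ = (2*(m+1)) * m^(n-1) := by ring
    _ < (n*m) * m^(n-1) := by
        refine Nat.mul_lt_mul_of_lt_of_le ?_ (le_refl _) (Nat.pow_pos (by nlinarith))
        nlinarith
    _ = n * m^n := by rw [hmn]; ring

private lemma aux_pow_big (n : ℕ) (h : 10 ≤ n) : 4*n^2 ≤ 2^(n-1) := by
  induction n, h using Nat.le_induction with
  | base => norm_num
  | succ k hk ih =>
    have e : 2^(k+1-1) = 2 * 2^(k-1) := by
      rw [← pow_succ']
      congr 1
      omega
    rw [e]
    nlinarith

private lemma aux_K (d n : ℕ) (hd : 2 ≤ d) (hn : 2 ≤ n)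
    (h22 : ¬(d = 2 ∧ n = 2)) (h32 : ¬(d = 3 ∧ n = 2)) :
    (d^(n-1)+1) * (d^(n-1)+n)^(n-1) < n * (d^n + n - 1)^(n-1) := by
  rcases eq_or_lt_of_le hn with h2 | h3
  · -- n = 2
    have hn2 : n = 2 := h2.symm
    subst hn2
    have hd4 : 4 ≤ d := by omega
    norm_num
    nlinarith
  · have hn3 : 3 ≤ n := h3
    by_cases hbig : 4*n^2 ≤ d^(n-1)
    · obtain ⟨k, rfl⟩ : ∃ k, n = k + 1 := ⟨n-1, by omega⟩
      simp only [Nat.add_sub_cancel] at hbig ⊢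
      have hG := aux_G (d^k) (k+1) hn3 hbig
      simp only [Nat.add_sub_cancel] at hG
      have hApow : (d^k)^(k+1) ≤ (d^(k+1) + (k+1) - 1)^k := by
        have e : (d^k)^(k+1) = (d^(k+1))^k := by
          rw [← pow_mul, ← pow_mul]
          congr 1
          ring
        rw [e]
        exact Nat.pow_le_pow_left (by omega) _
      calc (d^k+1) * (d^k+(k+1))^k < (k+1) * (d^k)^(k+1) := hG
        _ ≤ (k+1) * (d^(k+1) + (k+1) - 1)^k := Nat.mul_le_mul_left _ hApow
    · push_neg at hbig
      have h2n : 2^(n-1) ≤ d^(n-1) := Nat.pow_le_pow_left hd _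
      have hn9 : n ≤ 9 := by
        by_contra hc
        push_neg at hc
        have := aux_pow_big n (by omega)
        omega
      have hd2 : d^2 ≤ d^(n-1) := Nat.pow_le_pow_right (by omega) (by omega)
      have hd17 : d ≤ 17 := by nlinarith
      interval_cases n <;> interval_cases d <;> norm_num

theorem stmt_16 (d n : ℕ) (hd : 2 ≤ d) (hn : 2 ≤ n)
    (h22 : ¬(d = 2 ∧ n = 2)) (h32 : ¬(d = 3 ∧ n = 2)) :
    Nat.choose (d ^ n + n - 1) (n - 1) > Nat.choose (d ^ (n - 1) + n) n := by
  set m := d^(n-1) with hm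
  set A := d^n + n - 1 with hA
  set B := m + n with hB
  have hdn : d * m = d^n := by
    rw [hm, ← pow_succ']
    congr 1
    omega
  have hBA : B ≤ A := by
    have hm2 : 2 ≤ m := le_trans hd (Nat.le_self_pow (by omega) d)
    have : 2*m ≤ d^n := by rw [← hdn]; exact Nat.mul_le_mul_right _ hd
    omega
  have hK : (m+1) * B^(n-1) < n * A^(n-1) := aux_K d n hd hn h22 h32
  have hM : A^(n-1) * Nat.choose B (n-1) ≤ B^(n-1) * Nat.choose A (n-1) :=
    aux_M (n-1) A B hBA
  have hId : Nat.choose B n * n = Nat.choose B (n-1) * (m+1) := by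
    have e := Nat.choose_succ_right_eq B (n-1)
    rw [show n-1+1 = n by omega] at e
    rw [e]
    congr 1
    omega
  have hCpos : 0 < Nat.choose B (n-1) := Nat.choose_pos (by omega)
  have main : (n * B^(n-1)) * Nat.choose B n < (n * B^(n-1)) * Nat.choose A (n-1) := by
    calc (n * B^(n-1)) * Nat.choose B n
        = B^(n-1) * (Nat.choose B n * n) := by ring
      _ = B^(n-1) * (Nat.choose B (n-1) * (m+1)) := by rw [hId]
      _ = ((m+1) * B^(n-1)) * Nat.choose B (n-1) := by ring
      _ < (n * A^(n-1)) * Nat.choose B (n-1) :=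
          Nat.mul_lt_mul_of_lt_of_le hK (le_refl _) hCpos
      _ = n * (A^(n-1) * Nat.choose B (n-1)) := by ring
      _ ≤ n * (B^(n-1) * Nat.choose A (n-1)) := Nat.mul_le_mul_left _ hM
      _ = (n * B^(n-1)) * Nat.choose A (n-1) := by ring
  exact Nat.lt_of_mul_lt_mul_left main
end
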